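/- arXiv:2201.03310 — 5 statements merged into one kernel-verified Lean document; each statement's English description precedes it below -/
import Mathlib

section
/- For a connected acyclic unweighted undirected graph with incidence matrix B (with respect to some arbitrary orientation of edges) and Laplacian matrix L = B Bᵀ, it holds that Bᵀ L† B = I, where L† denotes the Moore–Penrose pseudoinverse of L. -/
/-! If `B` has a left inverse `C`, the first Penrose condition `L L† L = L` for `L = B Bᵀ` gives
`Bᵀ L† B = C (B Bᵀ L† B Bᵀ) Cᵀ = C B Bᵀ Cᵀ = (C B) (C B)ᵀ = 1`.
In an acyclic graph every edge `e = (u, v)` is a bridge, so the indicator `y` of the vertices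
reachable from `u` without `e` satisfies `yᵀ B = 1_e`; hence `x e = yᵀ (B x)`, the incidence matrix
has trivial kernel, and over a field it has a left inverse. -/

open Matrix
/-- The four Penrose conditions: `Ld` is the Moore–Penrose pseudoinverse of `L`. -/
def IsMoorePenrose {n : Type*} [Fintype n] [DecidableEq n]
    (L Ld : Matrix n n ℝ) : Prop :=
  L * Ld * L = L ∧ Ld * L * Ld = Ld ∧ (L * Ld)ᵀ = L * Ld ∧ (Ld * L)ᵀ = Ld * L

namespace Matrix

variable {m n K : Type*} [Fintype m] [Fintype n] [DecidableEq n]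

theorem exists_mul_eq_one_of_mulVec_injective [DecidableEq m] [Field K] {B : Matrix m n K}
    (hB : Function.Injective B.mulVec) : ∃ C : Matrix n m K, C * B = 1 := by
  obtain ⟨g, hg⟩ := B.mulVecLin.exists_leftInverse_of_injective
    (LinearMap.ker_eq_bot.mpr hB)
  refine ⟨LinearMap.toMatrix' g, ?_⟩
  rw [← LinearMap.toMatrix'_toLin' B, ← LinearMap.toMatrix'_comp, Matrix.toLin'_apply', hg,
    LinearMap.toMatrix'_id]

theorem transpose_mul_mul_eq_one_of_mul_eq_one [CommSemiring K] {B : Matrix m n K}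
    {C : Matrix n m K} (hCB : C * B = 1) {Ld : Matrix m m K}
    (hLd : B * Bᵀ * Ld * (B * Bᵀ) = B * Bᵀ) : Bᵀ * Ld * B = 1 := by
  have hBC : Bᵀ * Cᵀ = 1 := by rw [← transpose_mul, hCB, transpose_one]
  calc Bᵀ * Ld * B = C * B * (Bᵀ * Ld * B) * (Bᵀ * Cᵀ) := by
        rw [hCB, hBC, Matrix.one_mul, Matrix.mul_one]
    _ = C * (B * Bᵀ * Ld * (B * Bᵀ)) * Cᵀ := by simp only [Matrix.mul_assoc]
    _ = C * B * (Bᵀ * Cᵀ) := by rw [hLd]; simp only [Matrix.mul_assoc]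
    _ = 1 := by rw [hCB, hBC, Matrix.one_mul]

end Matrix

namespace SimpleGraph

variable {V : Type*} {G : SimpleGraph V}

theorem IsBridge.exists_separating_function {R : Type*} [Zero R] [One R] {u v : V}
    (h : G.IsBridge s(u, v)) :
    ∃ y : V → R, y u = 1 ∧ y v = 0 ∧
      ∀ ⦃a b⦄, G.Adj a b → s(a, b) ≠ s(u, v) → y a = y b := by
  classical
  set G' := G.deleteEdges {s(u, v)}
  refine ⟨fun i => if G'.Reachable u i then 1 else 0, by simp, if_neg (isBridge_iff.mp h),
    fun a b hab hne => ?_⟩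
  have hab' : G'.Adj a b := by simp [G', deleteEdges_adj, hab, hne]
  have hiff : G'.Reachable u a ↔ G'.Reachable u b :=
    ⟨fun hr => hr.trans hab'.reachable, fun hr => hr.trans hab'.symm.reachable⟩
  simp only [hiff]

end SimpleGraph

section Incidence

variable {V E : Type*} [Fintype V] [DecidableEq V]

def orientedIncidence (R : Type*) [Ring R] (s t : E → V) : Matrix V E R :=
  Matrix.of fun i e => if i = s e then 1 else if i = t e then -1 else 0

variable {R : Type*} [CommRing R] {s t : E → V}

theorem vecMul_orientedIncidence (hst : ∀ e, s e ≠ t e) (y : V → R) :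
    y ᵥ* orientedIncidence R s t = fun e => y (s e) - y (t e) := by
  funext e
  have hcol : ∀ i, orientedIncidence R s t i e =
      (if i = s e then 1 else 0) - (if i = t e then 1 else 0) := by
    intro i
    simp only [orientedIncidence, of_apply]
    split_ifs <;> grind
  simp [vecMul, dotProduct, hcol, mul_sub, Finset.sum_sub_distrib]

theorem mulVec_orientedIncidence_injective [Fintype E] {G : SimpleGraph V}
    (hacyc : G.IsAcyclic) (hst : ∀ e, G.Adj (s e) (t e))
    (hinj : Function.Injective fun e => s(s e, t e)) :
    Function.Injective (orientedIncidence R s t).mulVec := by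
  classical
  intro x x' hxx'
  funext e₀
  obtain ⟨y, hyu, hyv, hy⟩ := (SimpleGraph.isAcyclic_iff_forall_adj_isBridge.mp hacyc
    (hst e₀)).exists_separating_function (R := R)
  have hcut : y ᵥ* orientedIncidence R s t = Pi.single e₀ 1 := by
    rw [vecMul_orientedIncidence fun e => (hst e).ne]
    funext e
    by_cases he : e = e₀
    · subst he; simp [hyu, hyv]
    · simp [he, hy (hst e) (hinj.ne he)]
  calc x e₀ = y ⬝ᵥ (orientedIncidence R s t *ᵥ x) := by
        rw [dotProduct_mulVec, hcut, single_dotProduct, one_mul]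
    _ = x' e₀ := by
        rw [hxx', dotProduct_mulVec, hcut, single_dotProduct, one_mul]

end Incidence

theorem stmt_0_general {V E : Type*} [Fintype V] [Fintype E] [DecidableEq V] [DecidableEq E]
    (G : SimpleGraph V) (hacyc : G.IsAcyclic)
    (s t : E → V) (hst : ∀ e, G.Adj (s e) (t e))
    (huniq : ∀ a b, G.Adj a b → ∃! e, (s e = a ∧ t e = b) ∨ (s e = b ∧ t e = a))
    (B : Matrix V E ℝ)
    (hB : ∀ i e, B i e = if i = s e then 1 else if i = t e then -1 else 0)
    (Ld : Matrix V V ℝ) (hMP : IsMoorePenrose (B * Bᵀ) Ld) :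
    Bᵀ * Ld * B = 1 := by
  have hedge : Function.Injective fun e => s(s e, t e) := by
    intro e e' hee'
    obtain ⟨_, _, hunique⟩ := huniq _ _ (hst e')
    exact (hunique e (Sym2.eq_iff.mp hee')).trans (hunique e' (.inl ⟨rfl, rfl⟩)).symm
  obtain rfl : B = orientedIncidence ℝ s t := Matrix.ext hB
  obtain ⟨C, hCB⟩ := exists_mul_eq_one_of_mulVec_injective
    (mulVec_orientedIncidence_injective (R := ℝ) hacyc hst hedge)
  exact transpose_mul_mul_eq_one_of_mul_eq_one hCB (by simpa only [Matrix.mul_assoc] using hMP.1)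

/-- for a connected acyclic unweighted undirected graph with oriented
incidence matrix `B` and Laplacian `L = B Bᵀ`, it holds that `Bᵀ L† B = I`. -/
theorem stmt_0 {V E : Type*} [Fintype V] [Fintype E] [DecidableEq V] [DecidableEq E]
    (G : SimpleGraph V) (hconn : G.Connected) (hacyc : G.IsAcyclic)
    (s t : E → V) (hst : ∀ e, G.Adj (s e) (t e))
    (huniq : ∀ a b, G.Adj a b → ∃! e, (s e = a ∧ t e = b) ∨ (s e = b ∧ t e = a))
    (B : Matrix V E ℝ)
    (hB : ∀ i e, B i e = if i = s e then 1 else if i = t e then -1 else 0)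
    (Ld : Matrix V V ℝ) (hMP : IsMoorePenrose (B * Bᵀ) Ld) :
    Bᵀ * Ld * B = 1 :=
  stmt_0_general G hacyc s t hst huniq B hB Ld hMP
end

section
/- In an acyclic flow network, for any edge {i,j} not in the set of edges with controllable flows, the flow f_{ij} is independent of the amount of commodity supplied at every supplier vertex. Precisely, if {i,j} ∈ E is such that the half-cluster H_{ij} contains no supplier, then for any two commodity vectors m, m′ that agree on all consumer vertices, the corresponding flows satisfy f_{ij} = f′_{ij}. -/
/-!
Cutting the edge `{i, j}` of the tree splits off the half-cluster `H_{ij}`, and `(j, i)` is the only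
edge leaving it. Summing the balance equations over `H_{ij}`, the flows on inner edges cancel by
antisymmetry, so `f_{ji} = ∑_{v ∈ H_{ij}} m_v`. This sum involves consumers only.
-/

/-- `reachAvoid G i j v`: `v` lies in the connected component of `G ∖ {i}`
containing `j` (the half-cluster `H_{ij}`). -/
def reachAvoid {V : Type*} (G : SimpleGraph V) (i j v : V) : Prop :=
  Relation.ReflTransGen (fun a b => G.Adj a b ∧ b ≠ i) j v

open Finset

section Flow

variable {V M : Type*} [AddCommGroup M] {g : V → V → M}

lemma sum_sum_eq_zero_of_antisymm [IsAddTorsionFree M] (hg : ∀ a b, g b a = -g a b)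
    (s : Finset V) : ∑ v ∈ s, ∑ u ∈ s, g v u = 0 := by
  have hneg : ∑ v ∈ s, ∑ u ∈ s, g v u = -∑ v ∈ s, ∑ u ∈ s, g v u := by
    conv_lhs => rw [sum_comm]
    rw [← sum_neg_distrib]
    refine sum_congr rfl fun u _ => ?_
    rw [← sum_neg_distrib]
    exact sum_congr rfl fun v _ => hg u v
  rw [← two_nsmul_eq_zero, two_nsmul]
  nth_rewrite 2 [hneg]
  exact add_neg_cancel _

variable [Fintype V] [DecidableEq V]

lemma sum_sum_compl_eq_sum_sum_of_antisymm [IsAddTorsionFree M] (hg : ∀ a b, g b a = -g a b)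
    (s : Finset V) : ∑ v ∈ s, ∑ u ∈ sᶜ, g v u = ∑ v ∈ s, ∑ u, g v u := by
  simp only [← sum_add_sum_compl s (g _), sum_add_distrib, sum_sum_eq_zero_of_antisymm hg,
    zero_add]

lemma sum_sum_compl_eq_of_unique_boundary_edge {G : SimpleGraph V}
    (hsupp : ∀ a b, ¬ G.Adj a b → g a b = 0) {s : Finset V} {i j : V} (hj : j ∈ s) (hi : i ∉ s)
    (hbdry : ∀ v ∈ s, ∀ u ∉ s, G.Adj v u → v = j ∧ u = i) :
    ∑ v ∈ s, ∑ u ∈ sᶜ, g v u = g j i := by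
  rw [sum_eq_single_of_mem j hj, sum_eq_single_of_mem i (mem_compl.2 hi)]
  · intro u hu hui
    exact hsupp j u fun hju => hui (hbdry j hj u (mem_compl.1 hu) hju).2
  · intro v hv hvj
    refine sum_eq_zero fun u hu => hsupp v u fun hvu => hvj ?_
    exact (hbdry v hv u (mem_compl.1 hu) hvu).1

theorem flow_eq_sum_of_unique_boundary_edge [IsAddTorsionFree M] {G : SimpleGraph V} {n : V → M}
    (hanti : ∀ a b, g b a = -g a b) (hsupp : ∀ a b, ¬ G.Adj a b → g a b = 0)
    (hcons : ∀ v, ∑ u, g v u = n v) {s : Finset V} {i j : V} (hj : j ∈ s) (hi : i ∉ s)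
    (hbdry : ∀ v ∈ s, ∀ u ∉ s, G.Adj v u → v = j ∧ u = i) :
    g j i = ∑ v ∈ s, n v := by
  rw [← sum_sum_compl_eq_of_unique_boundary_edge hsupp hj hi hbdry,
    sum_sum_compl_eq_sum_sum_of_antisymm hanti]
  exact sum_congr rfl fun v _ => hcons v

end Flow

namespace reachAvoid

variable {V : Type*} {G : SimpleGraph V} {i j u v : V}

lemma tail (hv : reachAvoid G i j v) (hvu : G.Adj v u) (hui : u ≠ i) : reachAvoid G i j u :=
  Relation.ReflTransGen.tail hv ⟨hvu, hui⟩

lemma exists_walk_notMem_support (hji : j ≠ i) (hv : reachAvoid G i j v) :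
    ∃ w : G.Walk j v, i ∉ w.support := by
  induction hv with
  | refl => exact ⟨.nil, by simpa using hji.symm⟩
  | tail _ hbc ih =>
    obtain ⟨w, hw⟩ := ih
    refine ⟨w.concat hbc.1, ?_⟩
    simpa [SimpleGraph.Walk.support_concat, hw] using hbc.2.symm

lemma ne (hij : G.Adj i j) (hv : reachAvoid G i j v) : v ≠ i := by
  obtain ⟨w, hw⟩ := exists_walk_notMem_support hij.ne' hv
  rintro rfl
  exact hw w.end_mem_support

/-- In a forest, `j` is the only vertex of `H_{ij}` adjacent to `i`: the edge `{v, i}` is a bridge,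
so it lies on the walk `v ⇝ j → i`, whose only edge through `i` is `{j, i}`. -/
lemma eq_of_adj (hG : G.IsAcyclic) (hij : G.Adj i j) (hv : reachAvoid G i j v)
    (hvi : G.Adj v i) : v = j := by
  obtain ⟨w, hw⟩ := exists_walk_notMem_support hij.ne' hv
  have hbridge := SimpleGraph.isBridge_iff_forall_walk_mem_edges.1
    (SimpleGraph.isAcyclic_iff_forall_adj_isBridge.1 hG hvi) (w.reverse.concat hij.symm)
  rw [SimpleGraph.Walk.edges_concat, List.concat_eq_append, List.mem_append,
    SimpleGraph.Walk.edges_reverse, List.mem_reverse, List.mem_singleton] at hbridge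
  rcases hbridge with hmem | heq
  · exact absurd (w.snd_mem_support_of_mem_edges hmem) hw
  · simpa [hvi.ne] using heq

lemma boundary_edge (hG : G.IsAcyclic) (hij : G.Adj i j) (hv : reachAvoid G i j v)
    (hu : ¬ reachAvoid G i j u) (hvu : G.Adj v u) : v = j ∧ u = i := by
  have hui : u = i := by
    by_contra hui
    exact hu (hv.tail hvu hui)
  subst hui
  exact ⟨hv.eq_of_adj hG hij hvu, rfl⟩

end reachAvoid

theorem stmt_3_general {V : Type*} [Fintype V] (G : SimpleGraph V) (hG : G.IsTree)
    (Vs : Set V) (m m' : V → ℝ)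
    (hm : ∀ v, v ∉ Vs → m v = m' v)
    (f f' : V → V → ℝ)
    (hanti : ∀ a b, f b a = - f a b) (hanti' : ∀ a b, f' b a = - f' a b)
    (hsupp : ∀ a b, ¬ G.Adj a b → f a b = 0)
    (hsupp' : ∀ a b, ¬ G.Adj a b → f' a b = 0)
    (hcons : ∀ v, ∑ u, f v u = m v) (hcons' : ∀ v, ∑ u, f' v u = m' v)
    (i j : V) (hij : G.Adj i j)
    (hns : ∀ v, reachAvoid G i j v → v ∉ Vs) :
    f i j = f' i j := by
  classical
  let H : Finset V := {v | reachAvoid G i j v}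
  have hjH : j ∈ H := mem_filter.2 ⟨mem_univ j, .refl⟩
  have hiH : i ∉ H := fun h => (mem_filter.1 h).2.ne hij rfl
  have hbdry : ∀ v ∈ H, ∀ u ∉ H, G.Adj v u → v = j ∧ u = i := by
    simpa [H] using fun v hv u hu => reachAvoid.boundary_edge hG.isAcyclic hij hv hu
  have hflow := flow_eq_sum_of_unique_boundary_edge hanti hsupp hcons hjH hiH hbdry
  have hflow' := flow_eq_sum_of_unique_boundary_edge hanti' hsupp' hcons' hjH hiH hbdry
  have hmH : ∑ v ∈ H, m v = ∑ v ∈ H, m' v :=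
    sum_congr rfl fun v hv => hm v (hns v (mem_filter.1 hv).2)
  rw [← neg_neg (f i j), ← neg_neg (f' i j), ← hanti, ← hanti', hflow, hflow', hmH]

/-- in an acyclic flow network, if the half-cluster `H_{ij}` of an
edge `{i,j}` contains no supplier (i.e. `β_{ij} = 0`, so `{i,j} ∉ E_cf`), then
the flow `f_{ij}` does not depend on the supplied commodity: any two commodity
vectors `m, m'` agreeing on all consumers yield the same flow on `{i,j}`. -/
theorem stmt_3 {V : Type*} [Fintype V] (G : SimpleGraph V) (hG : G.IsTree)
    (Vs : Set V) (m m' : V → ℝ)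
    (hm : ∀ v, v ∉ Vs → m v = m' v)
    (hsum : ∑ v, m v = 0) (hsum' : ∑ v, m' v = 0)
    (f f' : V → V → ℝ)
    (hanti : ∀ a b, f b a = - f a b) (hanti' : ∀ a b, f' b a = - f' a b)
    (hsupp : ∀ a b, ¬ G.Adj a b → f a b = 0)
    (hsupp' : ∀ a b, ¬ G.Adj a b → f' a b = 0)
    (hcons : ∀ v, ∑ u, f v u = m v) (hcons' : ∀ v, ∑ u, f' v u = m' v)
    (i j : V) (hij : G.Adj i j)
    (hns : ∀ v, reachAvoid G i j v → v ∉ Vs) :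
    f i j = f' i j :=
  stmt_3_general G hG Vs m m' hm f f' hanti hanti' hsupp hsupp' hcons hcons' i j hij hns
end

section
/- Consider the coupled linear-max ODE system φ̂̇_i(t) = −k_φ ( φ̂_i(t) − max_{j ∈ V_i^out} max{ f_{ij}, φ̂_j(t) } ) on a finite directed acyclic graph with constant f ≥ 0, gain k_φ > 0, and initial conditions φ̂_i(0) = 0. Then every φ̂_i(t) converges as t → ∞ to the maximum downstream flow φ_i (the maximum of f over the out-tree of i, with value 0 if the out-tree is empty). -/
/-!
The out-trees satisfy the recursion `φ_i = max_{j ∈ V_i^out} max (f_ij, φ_j)`, so `φ` is the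
equilibrium of the system. Since the graph is acyclic we may argue by well-founded induction
along the edges: once `φ̂_j → φ_j` for every out-neighbour `j` of `i`, the input of the scalar
equation `φ̂̇_i = -k (φ̂_i - u_i)` converges to `φ_i`, and a stable scalar linear ODE follows
its input in the limit. For the latter, `e^{kt} (x t - L)` has derivative `k e^{kt} (u t - L)`,
which comparison with `ε e^{kt}` bounds once `|u - L| ≤ ε`.
-/

open Filter Topology Relation Finset

theorem abs_sub_le_of_hasDerivAt_neg_mul_sub {k L ε T : ℝ} {x u : ℝ → ℝ} (hk : 0 ≤ k)
    (hx : ∀ t, HasDerivAt x (-k * (x t - u t)) t) (hu : ∀ t ≥ T, |u t - L| ≤ ε) :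
    ∀ t ≥ T, |x t - L| ≤ Real.exp (-(k * (t - T))) * |x T - L| + ε := by
  set g : ℝ → ℝ := fun t => Real.exp (k * t) * (x t - L)
  have hexp : ∀ t, HasDerivAt (fun t => Real.exp (k * t)) (Real.exp (k * t) * k) t := fun t =>
    (Real.hasDerivAt_exp _).comp t ((hasDerivAt_id t).const_mul k |>.congr_deriv (mul_one k))
  have hg : ∀ t, HasDerivAt g (k * Real.exp (k * t) * (u t - L)) t := fun t =>
    ((hexp t).mul ((hx t).sub_const L)).congr_deriv (by ring)
  have hB : ∀ t, HasDerivAt (fun t => |g T| + ε * Real.exp (k * t))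
      (ε * (Real.exp (k * t) * k)) t := fun t => ((hexp t).const_mul ε).const_add _
  intro t ht
  have hε : 0 ≤ ε := (abs_nonneg _).trans (hu T le_rfl)
  have hgt : |g t| ≤ |g T| + ε * Real.exp (k * t) := by
    refine image_norm_le_of_norm_deriv_right_le_deriv_boundary (a := T) (b := t)
      (B := fun s => |g T| + ε * Real.exp (k * s))
      (fun s _ => (hg s).continuousAt.continuousWithinAt) (fun s _ => (hg s).hasDerivWithinAt)
      (le_add_of_nonneg_right (mul_nonneg hε (Real.exp_pos _).le)) hB (fun s hs => ?_)
      ⟨ht, le_rfl⟩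
    rw [Real.norm_eq_abs, abs_mul, abs_of_nonneg (by positivity)]
    calc k * Real.exp (k * s) * |u s - L|
        ≤ k * Real.exp (k * s) * ε := by gcongr; exact hu s hs.1
      _ = ε * (Real.exp (k * s) * k) := by ring
  have hxg : |x t - L| = Real.exp (-(k * t)) * |g t| := by
    rw [abs_mul, abs_of_pos (Real.exp_pos _), ← mul_assoc, ← Real.exp_add, neg_add_cancel,
      Real.exp_zero, one_mul]
  have hgT : |g T| = Real.exp (k * T) * |x T - L| := by
    rw [abs_mul, abs_of_pos (Real.exp_pos _)]
  calc |x t - L| = Real.exp (-(k * t)) * |g t| := hxg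
    _ ≤ Real.exp (-(k * t)) * (|g T| + ε * Real.exp (k * t)) := by gcongr
    _ = Real.exp (-(k * (t - T))) * |x T - L| + ε := by
      rw [hgT, mul_add, ← mul_assoc, ← Real.exp_add, mul_left_comm, ← Real.exp_add]
      ring_nf
      simp

theorem tendsto_of_hasDerivAt_neg_mul_sub {k L : ℝ} {x u : ℝ → ℝ} (hk : 0 < k)
    (hx : ∀ t, HasDerivAt x (-k * (x t - u t)) t) (hu : Tendsto u atTop (𝓝 L)) :
    Tendsto x atTop (𝓝 L) := by
  rw [Metric.tendsto_atTop] at hu ⊢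
  intro ε hε
  obtain ⟨T, hT⟩ := hu (ε / 2) (half_pos hε)
  have hdecay : Tendsto (fun t => Real.exp (-(k * (t - T))) * |x T - L|) atTop (𝓝 0) := by
    simpa [sub_eq_add_neg] using (Real.tendsto_exp_neg_atTop_nhds_zero.comp
      ((tendsto_atTop_add_const_right _ (-T) tendsto_id).const_mul_atTop hk)).mul_const
      |x T - L|
  obtain ⟨N, hN⟩ := (hdecay.eventually (gt_mem_nhds (half_pos hε))).exists_forall_of_atTop
  refine ⟨max T N, fun t ht => ?_⟩
  have hbound := abs_sub_le_of_hasDerivAt_neg_mul_sub hk.le hx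
    (fun s hs => by simpa [Real.dist_eq] using (hT s hs).le) t (le_of_max_le_left ht)
  rw [Real.dist_eq]
  linarith [hN t (le_of_max_le_right ht)]

theorem Filter.Tendsto.finset_fold_max {ι α β : Type*} [LinearOrder β] [TopologicalSpace β]
    [OrderClosedTopology β] {l : Filter α} {s : Finset ι} {c : β} {g : ι → α → β}
    {L : ι → β}
    (h : ∀ j ∈ s, Tendsto (g j) l (𝓝 (L j))) :
    Tendsto (fun t => s.fold max c (g · t)) l (𝓝 (s.fold max c L)) := by
  classical
  induction s using Finset.induction_on with
  | empty => exact tendsto_const_nhds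
  | insert a s ha ih =>
    simp only [Finset.fold_insert ha]
    exact (h a (mem_insert_self a s)).max (ih fun j hj => h j (mem_insert_of_mem hj))

section OutTree

variable {V : Type*} {r : V → V → Prop} {f : V → V → ℝ}

def outTreeFlows (r : V → V → Prop) (f : V → V → ℝ) (i : V) : Set ℝ :=
  insert 0 {x | ∃ j k, ReflTransGen r i j ∧ r j k ∧ x = f j k}

theorem mem_outTreeFlows_iff {i : V} {x : ℝ} :
    x ∈ outTreeFlows r f i ↔
      x = 0 ∨ ∃ j, r i j ∧ (x = f i j ∨ x ∈ outTreeFlows r f j) := by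
  simp only [outTreeFlows, Set.mem_insert_iff, Set.mem_ofPred_eq]
  constructor
  · rintro (rfl | ⟨j, k, hij, hjk, rfl⟩)
    · exact .inl rfl
    · rcases hij.cases_head with rfl | ⟨m, him, hmj⟩
      · exact .inr ⟨k, hjk, .inl rfl⟩
      · exact .inr ⟨m, him, .inr (.inr ⟨j, k, hmj, hjk, rfl⟩)⟩
  · rintro (rfl | ⟨j, hij, rfl | rfl | ⟨m, k, hjm, hmk, rfl⟩⟩)
    · exact .inl rfl
    · exact .inr ⟨i, j, .refl, hij, rfl⟩
    · exact .inl rfl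
    · exact .inr ⟨m, k, hjm.head hij, hmk, rfl⟩

theorem fold_max_out_eq_of_isGreatest_outTreeFlows [Fintype V] [DecidableRel r] {φ : V → ℝ}
    (hφ : ∀ i, IsGreatest (outTreeFlows r f i) (φ i)) (i : V) :
    (univ.filter (r i)).fold max 0 (fun j => max (f i j) (φ j)) = φ i := by
  apply le_antisymm
  · refine (fold_max_le _).2
      ⟨(hφ i).2 (mem_outTreeFlows_iff.2 (.inl rfl)), fun j hj => ?_⟩
    have hij := (mem_filter.1 hj).2
    exact max_le ((hφ i).2 (mem_outTreeFlows_iff.2 (.inr ⟨j, hij, .inl rfl⟩)))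
      ((hφ i).2 (mem_outTreeFlows_iff.2 (.inr ⟨j, hij, .inr (hφ j).1⟩)))
  · rcases mem_outTreeFlows_iff.1 (hφ i).1 with h | ⟨j, hij, h | h⟩
    · exact (le_fold_max _).2 (.inl h.le)
    · exact (le_fold_max _).2 (.inr ⟨j, by simpa using hij, h.le.trans (le_max_left _ _)⟩)
    · exact (le_fold_max _).2
        (.inr ⟨j, by simpa using hij, ((hφ j).2 h).trans (le_max_right _ _)⟩)

theorem wellFounded_transGen_swap [Finite V] (hacyc : ∀ i, ¬ TransGen r i i) :
    WellFounded (fun i j => TransGen r j i) :=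
  have : IsTrans V (fun i j => TransGen r j i) := ⟨fun _ _ _ h₁ h₂ => h₂.trans h₁⟩
  have : Std.Irrefl (fun i j => TransGen r j i) := ⟨hacyc⟩
  Finite.wellFounded_of_trans_of_irrefl _

end OutTree

theorem stmt_11_general {V : Type*} [Fintype V]
    (r : V → V → Prop) [DecidableRel r]
    (hacyc : ∀ i, ¬ Relation.TransGen r i i)
    (f : V → V → ℝ)
    (φ : V → ℝ)
    (hφ : ∀ i, IsGreatest
      (insert (0:ℝ) {x | ∃ j k, Relation.ReflTransGen r i j ∧ r j k ∧ x = f j k}) (φ i))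
    (kφ : ℝ) (hk : 0 < kφ)
    (φhat : V → ℝ → ℝ)
    (hode : ∀ i t, HasDerivAt (φhat i)
      (-kφ * (φhat i t -
        (Finset.univ.filter (fun j => r i j)).fold max 0 (fun j => max (f i j) (φhat j t)))) t) :
    ∀ i, Filter.Tendsto (φhat i) Filter.atTop (nhds (φ i)) := by
  intro i
  induction i using (wellFounded_transGen_swap hacyc).induction with
  | _ i ih =>
    refine tendsto_of_hasDerivAt_neg_mul_sub hk (hode i) ?_
    rw [← fold_max_out_eq_of_isGreatest_outTreeFlows hφ i]
    exact Tendsto.finset_fold_max fun j hj =>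
      tendsto_const_nhds.max (ih j (.single (mem_filter.1 hj).2))

/-- for the coupled ODE system
`φ̂̇_i = -k_φ (φ̂_i - max_{j ∈ V_i^out} max{f_{ij}, φ̂_j})` on a finite DAG with
constant `f ≥ 0`, `k_φ > 0` and `φ̂_i(0) = 0`, every `φ̂_i(t)` converges to the
maximum downstream flow `φ_i` (max of `f` over the out-tree of `i`, `0` if empty).
The finite max over the out-neighborhood is computed with `Finset.fold max 0`. -/
theorem stmt_11 {V : Type*} [Fintype V] [DecidableEq V]
    (r : V → V → Prop) [DecidableRel r]
    (hacyc : ∀ i, ¬ Relation.TransGen r i i)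
    (f : V → V → ℝ) (hf : ∀ i j, r i j → 0 ≤ f i j)
    (φ : V → ℝ)
    (hφ : ∀ i, IsGreatest
      (insert (0:ℝ) {x | ∃ j k, Relation.ReflTransGen r i j ∧ r j k ∧ x = f j k}) (φ i))
    (kφ : ℝ) (hk : 0 < kφ)
    (φhat : V → ℝ → ℝ) (h0 : ∀ i, φhat i 0 = 0)
    (hode : ∀ i t, HasDerivAt (φhat i)
      (-kφ * (φhat i t -
        (Finset.univ.filter (fun j => r i j)).fold max 0 (fun j => max (f i j) (φhat j t)))) t) :
    ∀ i, Filter.Tendsto (φhat i) Filter.atTop (nhds (φ i)) :=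
  stmt_11_general r hacyc f φ hφ kφ hk φhat hode
end

section
/- Let G = (V, E) be a finite graph with V partitioned into suppliers and consumers, and consider the iterative Boolean update β̂_{ij} ← β̂_{ij} ∨ ⋁_{k ≠ i, (j,k) ∈ E⃗⁺} β̂_{jk} applied synchronously to all ordered pairs (i,j) with {i,j} ∈ E, initialized with β̂_{ij} = 1 iff j is a supplier. If G is a tree with N vertices, then after at most N − 2 iterations, β̂_{ij} equals the supplier indicator β_{ij}, which is 1 iff the connected component of G ∖ {i} containing j contains a supplier. -/
/-!
Write `β n i j` for the `n`-th iterate. Soundness: by induction on `n`, `β n i j` is witnessed by a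
walk from `j` to a supplier avoiding `i`; in the inductive step such a walk from `k` avoiding `j` also
avoids `i`, because in a forest every walk from `k` to another neighbour `i` of `j` passes through `j`.
Completeness: a path `j = v₀, v₁, …, v_m` to a supplier avoiding `i` gives `β m i j`, pushing the
supplier back one vertex per iteration along the path. Such a path omits `i` and has no repeated
vertex, so `m ≤ N - 2`, and the iteration is monotone.
-/

open SimpleGraph

namespace SimpleGraph

variable {V : Type*} {G : SimpleGraph V}

lemma reflTransGen_adj_ne_iff_exists_walk {i a b : V} (ha : a ≠ i) :
    Relation.ReflTransGen (fun x y => G.Adj x y ∧ y ≠ i) a b ↔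
      ∃ p : G.Walk a b, i ∉ p.support := by
  constructor
  · intro h
    induction h using Relation.ReflTransGen.head_induction_on with
    | refl => exact ⟨.nil, by simpa using ha.symm⟩
    | head hxy _ ih =>
      obtain ⟨p, hp⟩ := ih hxy.2
      exact ⟨.cons hxy.1 p, by simp [Walk.support_cons, hp, ha.symm]⟩
  · rintro ⟨p, hp⟩
    induction p with
    | nil => exact .refl
    | cons hxy q ih =>
      simp only [Walk.support_cons, List.mem_cons, not_or] at hp
      have hy : _ ≠ i := fun h => hp.2 (h ▸ q.start_mem_support)
      exact .head ⟨hxy, hy⟩ (ih hy hp.2)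

lemma IsAcyclic.mem_support_of_adj_of_adj (hG : G.IsAcyclic) {i j k : V} (hij : G.Adj i j)
    (hjk : G.Adj j k) (hik : i ≠ k) (p : G.Walk k i) : j ∈ p.support := by
  classical
  by_contra hj
  have hj' : j ∉ p.bypass.support := fun h => hj (p.support_bypass_subset_support h)
  have hunique := (hG.subsingleton_path k j).elim
    ⟨_, p.bypass_isPath.concat hj' hij⟩ (Path.singleton hjk.symm)
  have hlen : p.bypass.length + 1 = 1 := by
    simpa [Walk.length_concat] using congrArg (fun q : G.Path k j => q.1.length) hunique
  exact hik (Walk.eq_of_length_eq_zero (by omega : p.bypass.length = 0)).symm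

lemma Walk.IsPath.length_le_card_sub_two [Fintype V] {a b i : V} {p : G.Walk a b}
    (hp : p.IsPath) (hi : i ∉ p.support) : p.length ≤ Fintype.card V - 2 := by
  classical
  have hsub : p.support.toFinset ⊆ Finset.univ.erase i := fun x hx =>
    Finset.mem_erase.2 ⟨fun h => hi (h ▸ List.mem_toFinset.1 hx), Finset.mem_univ x⟩
  have hcard := Finset.card_le_card hsub
  rw [List.toFinset_card_of_nodup hp.support_nodup, Finset.card_erase_of_mem (Finset.mem_univ i),
    Finset.card_univ, Walk.length_support] at hcard
  omega

end SimpleGraph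

structure IsSupplierPropagation {V : Type*} (G : SimpleGraph V) (Vs : Set V)
    (β : ℕ → V → V → Prop) : Prop where
  init : ∀ i j, β 0 i j ↔ j ∈ Vs
  step : ∀ n i j, β (n + 1) i j ↔ β n i j ∨ ∃ k, k ≠ i ∧ G.Adj j k ∧ β n j k

namespace IsSupplierPropagation

variable {V : Type*} {G : SimpleGraph V} {Vs : Set V} {β : ℕ → V → V → Prop}

lemma monotone (hβ : IsSupplierPropagation G Vs β) (i j : V) : Monotone fun n => β n i j :=
  monotone_nat_of_le_succ fun n h => (hβ.step n i j).2 (.inl h)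

lemma of_isPath (hβ : IsSupplierPropagation G Vs β) {i j v : V} (hv : v ∈ Vs)
    (p : G.Walk j v) (hp : p.IsPath) (hi : i ∉ p.support) : β p.length i j := by
  induction p generalizing i with
  | nil => exact (hβ.init i _).2 hv
  | @cons j k v hjk q ih =>
    rw [Walk.cons_isPath_iff] at hp
    simp only [Walk.support_cons, List.mem_cons, not_or] at hi
    have hki : k ≠ i := fun h => hi.2 (h ▸ q.start_mem_support)
    exact (hβ.step _ i j).2 (.inr ⟨k, hki, hjk, ih hv hp.1 hp.2⟩)

lemma exists_supplier (hβ : IsSupplierPropagation G Vs β) (hG : G.IsAcyclic) {n : ℕ} {i j : V}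
    (hij : G.Adj i j) (h : β n i j) :
    ∃ v ∈ Vs, Relation.ReflTransGen (fun a b => G.Adj a b ∧ b ≠ i) j v := by
  classical
  induction n generalizing i j with
  | zero => exact ⟨j, (hβ.init i j).1 h, .refl⟩
  | succ n ih =>
    rcases (hβ.step n i j).1 h with h | ⟨k, hki, hjk, hk⟩
    · exact ih hij h
    obtain ⟨v, hv, hkv⟩ := ih hjk hk
    obtain ⟨p, hjp⟩ := (reflTransGen_adj_ne_iff_exists_walk hjk.ne').1 hkv
    have hip : i ∉ p.support := fun h =>
      hjp (p.support_takeUntil_subset_support h (hG.mem_support_of_adj_of_adj hij hjk hki.symm _))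
    refine ⟨v, hv, (reflTransGen_adj_ne_iff_exists_walk hij.ne').2 ⟨.cons hjk p, ?_⟩⟩
    simp [Walk.support_cons, hip, hij.ne]

end IsSupplierPropagation

/-- on a tree with `N` vertices, the synchronous Boolean iteration
`β̂_{ij} ← β̂_{ij} ∨ ⋁_{k ≠ i, {j,k} ∈ E} β̂_{jk}`, initialized with
`β̂_{ij} = 1 ↔ j` is a supplier, converges after at most `N - 2` steps to the
supplier indicator `β_{ij}`, which holds iff the connected component of
`G ∖ {i}` containing `j` (the half-cluster `H_{ij}`) contains a supplier. -/
theorem stmt_13 {V : Type*} [Fintype V] (G : SimpleGraph V) (hG : G.IsTree)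
    (Vs : Set V)
    (βhat : ℕ → V → V → Prop)
    (h0 : ∀ i j, βhat 0 i j ↔ j ∈ Vs)
    (hstep : ∀ n i j, βhat (n+1) i j ↔ βhat n i j ∨ ∃ k, k ≠ i ∧ G.Adj j k ∧ βhat n j k) :
    ∀ n, Fintype.card V - 2 ≤ n → ∀ i j, G.Adj i j →
      (βhat n i j ↔ ∃ v ∈ Vs, Relation.ReflTransGen (fun a b => G.Adj a b ∧ b ≠ i) j v) := by
  classical
  have hβ : IsSupplierPropagation G Vs βhat := ⟨h0, hstep⟩
  intro n hn i j hij
  refine ⟨hβ.exists_supplier hG.isAcyclic hij, ?_⟩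
  rintro ⟨v, hv, hjv⟩
  obtain ⟨p, hip⟩ := (reflTransGen_adj_ne_iff_exists_walk hij.ne').1 hjv
  have hi : i ∉ p.bypass.support := fun h => hip (p.support_bypass_subset_support h)
  exact hβ.monotone i j ((p.bypass_isPath.length_le_card_sub_two hi).trans hn)
    (hβ.of_isPath hv _ p.bypass_isPath hi)
end

section
/- Any two distinct consumer clusters in an acyclic flow network are disjoint. -/
/-- The supplier indicator `β_{ij} = 1`: the half-cluster `H_{ij}` contains a supplier. -/
def hasSupplier {V : Type*} (G : SimpleGraph V) (Vs : Set V) (i j : V) : Prop :=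
  ∃ v ∈ Vs, reachAvoid G i j v

/-- `(a,b)` is a directed edge of `E⃗_cf`: a controllable-flow edge oriented along
its (positive) flow. -/
def cfRel {V : Type*} (G : SimpleGraph V) (Vs : Set V) (f : V → V → ℝ) (a b : V) : Prop :=
  G.Adj a b ∧ 0 < f a b ∧ hasSupplier G Vs a b ∧ hasSupplier G Vs b a

/-- Undirected adjacency in the flow-oriented controllable subgraph. -/
def cfAdj {V : Type*} (G : SimpleGraph V) (Vs : Set V) (f : V → V → ℝ) (a b : V) : Prop :=
  cfRel G Vs f a b ∨ cfRel G Vs f b a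

/-- `(j,k)` belongs to the downstream (out-tree) `D_i` of vertex `i` in `(V_cf, E⃗_cf)`. -/
def Dmem {V : Type*} (G : SimpleGraph V) (Vs : Set V) (f : V → V → ℝ) (i j k : V) : Prop :=
  Relation.ReflTransGen (cfRel G Vs f) i j ∧ cfRel G Vs f j k

/-- `(j,k)` is a maximum downstream edge (MDE) of vertex `i`: an argmax of
`f_{pq}/f̄_{pq}` over `D_i`. -/
def isMDE {V : Type*} (G : SimpleGraph V) (Vs : Set V) (f fbar : V → V → ℝ)
    (i j k : V) : Prop :=
  Dmem G Vs f i j k ∧ ∀ p q, Dmem G Vs f i p q → f p q / fbar p q ≤ f j k / fbar j k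

/-- `(j,k)` is a maximum downstream edge of some supplier vertex (MDES). -/
def isMDES {V : Type*} (G : SimpleGraph V) (Vs : Set V) (f fbar : V → V → ℝ)
    (j k : V) : Prop :=
  ∃ i ∈ Vs, isMDE G Vs f fbar i j k

/-- A consumer cluster: a nonempty connected set of consumers in the controllable
subgraph, with no internal MDES, such that every controllable edge between an
outside consumer and the cluster is an MDES, and with at least one MDES of
`M_{s→c}` terminating in it. -/
def ConsumerCluster {V : Type*} (G : SimpleGraph V) (Vs : Set V)
    (f fbar : V → V → ℝ) (C : Set V) : Prop :=
  C.Nonempty ∧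
  (∀ v ∈ C, v ∉ Vs) ∧
  (∀ u ∈ C, ∀ v ∈ C,
    Relation.ReflTransGen (fun a b => cfAdj G Vs f a b ∧ b ∈ C) u v) ∧
  (∀ j ∈ C, ∀ k ∈ C, ¬ isMDES G Vs f fbar j k) ∧
  (∀ i j, i ∉ C → i ∉ Vs → j ∈ C → cfAdj G Vs f i j →
    isMDES G Vs f fbar i j ∨ isMDES G Vs f fbar j i) ∧
  (∃ i j, isMDES G Vs f fbar i j ∧ j ∉ Vs ∧ j ∈ C)

namespace ConsumerCluster

variable {V : Type*} {G : SimpleGraph V} {Vs : Set V} {f fbar : V → V → ℝ} {C₁ C₂ : Set V}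

/-- Were `c ∉ C₂`, the boundary condition of `C₂` would make the edge `bc` an MDES inside `C₁`. -/
theorem mem_of_cfAdj (h₁ : ConsumerCluster G Vs f fbar C₁) (h₂ : ConsumerCluster G Vs f fbar C₂)
    {b c : V} (hb₁ : b ∈ C₁) (hb₂ : b ∈ C₂) (hc₁ : c ∈ C₁) (hbc : cfAdj G Vs f b c) :
    c ∈ C₂ := by
  obtain ⟨-, hconsumer₁, -, hinternal₁, -, -⟩ := h₁
  obtain ⟨-, -, -, -, hboundary₂, -⟩ := h₂
  by_contra hc₂
  rcases hboundary₂ c b hc₂ (hconsumer₁ c hc₁) hb₂ hbc.symm with hcb | hbc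
  · exact hinternal₁ c hc₁ b hb₁ hcb
  · exact hinternal₁ b hb₁ c hc₁ hbc

theorem subset_of_mem (h₁ : ConsumerCluster G Vs f fbar C₁) (h₂ : ConsumerCluster G Vs f fbar C₂)
    {x : V} (hx₁ : x ∈ C₁) (hx₂ : x ∈ C₂) : C₁ ⊆ C₂ := by
  suffices h : ∀ u, Relation.ReflTransGen (fun a b => cfAdj G Vs f a b ∧ b ∈ C₁) x u →
      u ∈ C₁ ∧ u ∈ C₂ from
    fun u hu => (h u (h₁.2.2.1 x hx₁ u hu)).2
  intro u hxu
  induction hxu with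
  | refl => exact ⟨hx₁, hx₂⟩
  | tail _ hbc ih => exact ⟨hbc.2, h₁.mem_of_cfAdj h₂ ih.1 ih.2 hbc.2 hbc.1⟩

theorem eq_of_mem (h₁ : ConsumerCluster G Vs f fbar C₁) (h₂ : ConsumerCluster G Vs f fbar C₂)
    {x : V} (hx₁ : x ∈ C₁) (hx₂ : x ∈ C₂) : C₁ = C₂ :=
  (h₁.subset_of_mem h₂ hx₁ hx₂).antisymm (h₂.subset_of_mem h₁ hx₂ hx₁)

end ConsumerCluster

theorem stmt_14_general {V : Type*} (G : SimpleGraph V)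
    (Vs : Set V)
    (f fbar : V → V → ℝ)
    (C₁ C₂ : Set V)
    (h₁ : ConsumerCluster G Vs f fbar C₁) (h₂ : ConsumerCluster G Vs f fbar C₂)
    (hne : C₁ ≠ C₂) :
    Disjoint C₁ C₂ :=
  Set.disjoint_left.2 fun _ hx₁ hx₂ => hne (h₁.eq_of_mem h₂ hx₁ hx₂)

/-- any two distinct consumer clusters in an acyclic flow network
are disjoint. -/
theorem stmt_14 {V : Type*} [Fintype V] (G : SimpleGraph V) (hG : G.IsTree)
    (Vs : Set V) (m : V → ℝ)
    (hms : ∀ v ∈ Vs, 0 < m v) (hmc : ∀ v, v ∉ Vs → m v ≤ 0)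
    (hsum : ∑ v, m v = 0)
    (f fbar : V → V → ℝ)
    (hanti : ∀ a b, f b a = - f a b)
    (hsupp : ∀ a b, ¬ G.Adj a b → f a b = 0)
    (hcons : ∀ v, ∑ u, f v u = m v)
    (hfbar : ∀ a b, G.Adj a b → 0 < fbar a b)
    (C₁ C₂ : Set V)
    (h₁ : ConsumerCluster G Vs f fbar C₁) (h₂ : ConsumerCluster G Vs f fbar C₂)
    (hne : C₁ ≠ C₂) :
    Disjoint C₁ C₂ :=
  stmt_14_general G Vs f fbar C₁ C₂ h₁ h₂ hne
end
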